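/- Define d(X_α, X_β) = inf Σ_{n=1}^N J(X_{n−1}, X_n) over all finite sequences {X_n}_{n=0}^N ⊂ F₀ with X₀ = X_α, X_N = X_β, where J(X_α,X_β) = inf_{f₁,f₂∈G}(‖X_α∘f₁ − X_β‖ + ‖X_α − X_β∘f₂‖). Then (1/2)‖X_α − X_β‖_{L^∞} ≤ d(X_α, X_β) ≤ 2‖X_α − X_β‖. -/

import Mathlib

open MeasureTheory
open scoped ENNReal NNReal

/-- A tuple of Lagrangian coordinates `X = (y, U, H, r)`. -/
structure LagTuple where
  y : ℝ → ℝ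
  U : ℝ → ℝ
  H : ℝ → ℝ
  r : ℝ → ℝ

/-- Relabeling action: `X∘f = (y∘f, U∘f, H∘f, (r∘f)·f_ξ)`. -/
noncomputable def LagTuple.comp (X : LagTuple) (f : ℝ → ℝ) : LagTuple :=
  ⟨X.y ∘ f, X.U ∘ f, X.H ∘ f, fun ξ => X.r (f ξ) * deriv f ξ⟩

/-- Membership in the relabeling group `G`. -/
def InG (f : Homeomorph ℝ ℝ) : Prop :=
  (∃ C : ℝ, ∀ x, |f x - x| ≤ C) ∧
  (∃ L : NNReal, LipschitzWith L (fun x => f x - x)) ∧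
  (∃ C : ℝ, ∀ x, |f.symm x - x| ≤ C) ∧
  (∃ L : NNReal, LipschitzWith L (fun x => f.symm x - x)) ∧
  MemLp (fun x => deriv f x - 1) 2 (volume : Measure ℝ)

/-- The `L^∞`-type distance `‖X - Y‖_{L^∞}`, with the identity subtracted in
the `y`-component. -/
noncomputable def LinfDist (X Y : LagTuple) : ℝ≥0∞ :=
  (⨆ ξ : ℝ, (‖X.y ξ - Y.y ξ‖₊ : ℝ≥0∞)) +
    (⨆ ξ : ℝ, (‖X.U ξ - Y.U ξ‖₊ : ℝ≥0∞)) +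
    ⨆ ξ : ℝ, (‖X.H ξ - Y.H ξ‖₊ : ℝ≥0∞)

/-- The `E`-norm distance `‖X - Y‖_E = ‖ζ‖_V + ‖U‖_{H¹} + ‖H‖_V + ‖r‖_{L²}`
of the difference. -/
noncomputable def ELagDist (X Y : LagTuple) : ℝ≥0∞ :=
  LinfDist X Y +
    eLpNorm (fun ξ => deriv X.y ξ - deriv Y.y ξ) 2 (volume : Measure ℝ) +
    eLpNorm (fun ξ => X.U ξ - Y.U ξ) 2 (volume : Measure ℝ) +
    eLpNorm (fun ξ => deriv X.U ξ - deriv Y.U ξ) 2 (volume : Measure ℝ) +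
    eLpNorm (fun ξ => deriv X.H ξ - deriv Y.H ξ) 2 (volume : Measure ℝ) +
    eLpNorm (fun ξ => X.r ξ - Y.r ξ) 2 (volume : Measure ℝ)

/-- `J(X_α,X_β) = inf_{f₁,f₂ ∈ G} (‖X_α∘f₁ - X_β‖ + ‖X_α - X_β∘f₂‖)`. -/
noncomputable def Jdist (Xα Xβ : LagTuple) : ℝ≥0∞ :=
  ⨅ (f₁ : Homeomorph ℝ ℝ) (_ : InG f₁) (f₂ : Homeomorph ℝ ℝ) (_ : InG f₂),
    (ELagDist (Xα.comp f₁) Xβ + ELagDist Xα (Xβ.comp f₂))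

/-- Membership in the section `F₀`: `y + H = id`, `0 ≤ y_ξ, H_ξ ≤ 1`,
`|U_ξ| ≤ 1` and the energy identity hold. -/
def InF0 (X : LagTuple) : Prop :=
  (∀ ξ, X.y ξ + X.H ξ = ξ) ∧
  LipschitzWith 1 X.y ∧ LipschitzWith 1 X.U ∧ LipschitzWith 1 X.H ∧
  (∀ᵐ ξ : ℝ, 0 ≤ deriv X.y ξ ∧ deriv X.y ξ ≤ 1) ∧
  (∀ᵐ ξ : ℝ, 0 ≤ deriv X.H ξ ∧ deriv X.H ξ ≤ 1) ∧
  (∀ᵐ ξ : ℝ, |deriv X.U ξ| ≤ 1) ∧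
  ∀ᵐ ξ : ℝ, deriv X.y ξ * deriv X.H ξ =
    (deriv X.y ξ)^2 * (X.U ξ)^2 + (deriv X.U ξ)^2 + (X.r ξ)^2

/-- The chain distance `d(X_α,X_β) = inf Σ J(X_{n-1},X_n)` over finite
sequences in `F₀` joining `X_α` to `X_β`. -/
noncomputable def chainDist (Xα Xβ : LagTuple) : ℝ≥0∞ :=
  ⨅ (N : ℕ) (Xs : ℕ → LagTuple) (_ : Xs 0 = Xα) (_ : Xs N = Xβ)
    (_ : ∀ n ≤ N, InF0 (Xs n)) (_ : 0 < N),
    ∑ n ∈ Finset.range N, Jdist (Xs n) (Xs (n + 1))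


/-!
`‖·‖_{L^∞}` is the `ℓ¹`-sum of three uniform distances, so it satisfies the triangle inequality
and the lower bound reduces to `‖X - Y‖_{L^∞} ≤ 2 J(X, Y)` for `X, Y ∈ F₀`. For a relabeling `f`,
the constraint `y + H = id` on both sides bounds the displacement `sup |f ξ - ξ|` by the `y`- and
`H`-parts of `‖X∘f - Y‖_{L^∞}`; as `y, U, H` are `1`-Lipschitz, undoing the relabeling costs at
most this displacement in each component, whence `‖X - Y‖_{L^∞} ≤ 4 ‖X∘f - Y‖_{L^∞}`. The upper
bound takes identity relabelings and the two-point chain.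
-/

open UniformFun
open scoped UniformConvergence

section UniformDistance

variable {ι α β E : Type*}

theorem LipschitzWith.edist_ofFun_comp_le [PseudoEMetricSpace α] [PseudoEMetricSpace β]
    {K : ℝ≥0} {g : α → β} (hg : LipschitzWith K g) (f h : ι → α) :
    edist (ofFun (g ∘ f)) (ofFun (g ∘ h)) ≤ K * edist (ofFun f) (ofFun h) :=
  edist_le.2 fun x => (hg.edist_le_mul _ _).trans (by gcongr; exact edist_eval_le)

theorem LipschitzWith.edist_ofFun_le_edist_comp_add [PseudoEMetricSpace α]
    [PseudoEMetricSpace β] {g : α → β} (hg : LipschitzWith 1 g) (f : α → α) (h : α → β) :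
    edist (ofFun g) (ofFun h) ≤ edist (ofFun f) (ofFun id) + edist (ofFun (g ∘ f)) (ofFun h) :=
  calc edist (ofFun g) (ofFun h)
      ≤ edist (ofFun (g ∘ id)) (ofFun (g ∘ f)) + edist (ofFun (g ∘ f)) (ofFun h) :=
        edist_triangle _ _ _
    _ ≤ _ := by
        gcongr
        simpa [edist_comm] using hg.edist_ofFun_comp_le id f

theorem edist_ofFun_le_of_add_eq_id [SeminormedAddCommGroup E] {a b c d : E → E}
    (hab : ∀ x, a x + b x = x) (hcd : ∀ x, c x + d x = x) (f k : ι → E) :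
    edist (ofFun f) (ofFun k) ≤
      edist (ofFun (a ∘ f)) (ofFun (c ∘ k)) + edist (ofFun (b ∘ f)) (ofFun (d ∘ k)) :=
  edist_le.2 fun x =>
    calc edist (f x) (k x) = edist (a (f x) + b (f x)) (c (k x) + d (k x)) := by rw [hab, hcd]
      _ ≤ edist (a (f x)) (c (k x)) + edist (b (f x)) (d (k x)) := edist_add_add_le ..
      _ ≤ _ := add_le_add edist_eval_le edist_eval_le

end UniformDistance

namespace LagTuple

theorem comp_id (X : LagTuple) : X.comp id = X := by
  simp [LagTuple.comp]

noncomputable def linfCoords (X : LagTuple) : PiLp 1 (fun _ : Fin 3 => ℝ →ᵤ ℝ) :=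
  WithLp.toLp 1 ![ofFun X.y, ofFun X.U, ofFun X.H]

end LagTuple

theorem InG_refl : InG (Homeomorph.refl ℝ) := by
  simp only [InG, Homeomorph.refl_apply, id_eq, sub_self, abs_zero, forall_const,
    Homeomorph.refl_symm, deriv_id', MemLp.zero', and_true]
  exact ⟨⟨0, le_rfl⟩, ⟨0, .const 0⟩, ⟨0, le_rfl⟩, ⟨0, .const 0⟩⟩

theorem LinfDist_eq_add (X Y : LagTuple) :
    LinfDist X Y = edist (ofFun X.y) (ofFun Y.y) + edist (ofFun X.U) (ofFun Y.U) +
      edist (ofFun X.H) (ofFun Y.H) := by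
  simp [LinfDist, edist_def, edist_eq_enorm_sub, enorm_eq_nnnorm]

theorem LinfDist_eq_edist_linfCoords (X Y : LagTuple) :
    LinfDist X Y = edist X.linfCoords Y.linfCoords := by
  rw [PiLp.edist_eq_sum (by norm_num), LinfDist_eq_add]
  simp [Fin.sum_univ_three, LagTuple.linfCoords, add_assoc]

theorem LinfDist_comm (X Y : LagTuple) : LinfDist X Y = LinfDist Y X := by
  simp only [LinfDist_eq_edist_linfCoords, edist_comm]

theorem LinfDist_le_range_sum_LinfDist (Xs : ℕ → LagTuple) (N : ℕ) :
    LinfDist (Xs 0) (Xs N) ≤ ∑ n ∈ Finset.range N, LinfDist (Xs n) (Xs (n + 1)) := by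
  simpa only [LinfDist_eq_edist_linfCoords] using
    edist_le_range_sum_edist (fun n => (Xs n).linfCoords) N

theorem LinfDist_le_ELagDist (X Y : LagTuple) : LinfDist X Y ≤ ELagDist X Y := by
  unfold ELagDist
  iterate 5 refine le_add_right ?_
  exact le_rfl

theorem LinfDist_le_four_mul_LinfDist_comp_left {X Y : LagTuple} (hX : InF0 X) (hY : InF0 Y)
    (f : ℝ → ℝ) : LinfDist X Y ≤ 4 * LinfDist (X.comp f) Y := by
  obtain ⟨hXid, hXy, hXU, hXH, -⟩ := hX
  set D := edist (ofFun f) (ofFun id)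
  set A := edist (ofFun (X.y ∘ f)) (ofFun Y.y)
  set B := edist (ofFun (X.U ∘ f)) (ofFun Y.U)
  set C := edist (ofFun (X.H ∘ f)) (ofFun Y.H)
  have hD : D ≤ A + C := edist_ofFun_le_of_add_eq_id hXid hY.1 f id
  have hcomp : LinfDist (X.comp f) Y = A + B + C := LinfDist_eq_add _ _
  calc LinfDist X Y ≤ (D + A) + (D + B) + (D + C) := by
        rw [LinfDist_eq_add]
        gcongr
        exacts [hXy.edist_ofFun_le_edist_comp_add f Y.y, hXU.edist_ofFun_le_edist_comp_add f Y.U,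
          hXH.edist_ofFun_le_edist_comp_add f Y.H]
    _ ≤ ((A + C) + A) + ((A + C) + B) + ((A + C) + C) + 3 * B := le_add_right (by gcongr)
    _ = 4 * LinfDist (X.comp f) Y := by rw [hcomp]; ring

theorem LinfDist_le_four_mul_LinfDist_comp_right {X Y : LagTuple} (hX : InF0 X) (hY : InF0 Y)
    (f : ℝ → ℝ) : LinfDist X Y ≤ 4 * LinfDist X (Y.comp f) := by
  rw [LinfDist_comm, LinfDist_comm X]
  exact LinfDist_le_four_mul_LinfDist_comp_left hY hX f

theorem LinfDist_le_two_mul_Jdist {X Y : LagTuple} (hX : InF0 X) (hY : InF0 Y) :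
    LinfDist X Y ≤ 2 * Jdist X Y := by
  simp only [Jdist, ENNReal.mul_iInf_of_ne two_ne_zero ENNReal.ofNat_ne_top]
  refine le_iInf₂ fun f₁ _ => le_iInf₂ fun f₂ _ => ?_
  set a := ELagDist (X.comp f₁) Y
  set b := ELagDist X (Y.comp f₂)
  have ha : LinfDist X Y ≤ 4 * a :=
    (LinfDist_le_four_mul_LinfDist_comp_left hX hY f₁).trans
      (by gcongr; exact LinfDist_le_ELagDist ..)
  have hb : LinfDist X Y ≤ 4 * b :=
    (LinfDist_le_four_mul_LinfDist_comp_right hX hY f₂).trans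
      (by gcongr; exact LinfDist_le_ELagDist ..)
  rcases le_total a b with hab | hba
  · calc LinfDist X Y ≤ 2 * (a + a) := ha.trans_eq (by ring)
      _ ≤ 2 * (a + b) := by gcongr
  · calc LinfDist X Y ≤ 2 * (b + b) := hb.trans_eq (by ring)
      _ ≤ 2 * (a + b) := by gcongr

theorem LinfDist_le_two_mul_chainDist (Xα Xβ : LagTuple) :
    LinfDist Xα Xβ ≤ 2 * chainDist Xα Xβ := by
  simp only [chainDist, ENNReal.mul_iInf_of_ne two_ne_zero ENNReal.ofNat_ne_top]
  refine le_iInf fun N => le_iInf fun Xs => le_iInf fun h0 => le_iInf fun hN =>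
    le_iInf fun hF => le_iInf fun _ => ?_
  subst h0 hN
  calc LinfDist (Xs 0) (Xs N)
      ≤ ∑ n ∈ Finset.range N, LinfDist (Xs n) (Xs (n + 1)) :=
        LinfDist_le_range_sum_LinfDist Xs N
    _ ≤ ∑ n ∈ Finset.range N, 2 * Jdist (Xs n) (Xs (n + 1)) :=
        Finset.sum_le_sum fun n hn =>
          have hn : n < N := Finset.mem_range.1 hn
          LinfDist_le_two_mul_Jdist (hF n hn.le) (hF (n + 1) hn)
    _ = 2 * ∑ n ∈ Finset.range N, Jdist (Xs n) (Xs (n + 1)) := (Finset.mul_sum ..).symm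

theorem Jdist_le_two_mul_ELagDist (X Y : LagTuple) : Jdist X Y ≤ 2 * ELagDist X Y :=
  (iInf₂_le _ InG_refl).trans <| (iInf₂_le _ InG_refl).trans <| by
    simp [LagTuple.comp_id, two_mul]

theorem chainDist_le_Jdist {Xα Xβ : LagTuple} (hα : InF0 Xα) (hβ : InF0 Xβ) :
    chainDist Xα Xβ ≤ Jdist Xα Xβ := by
  have hF : ∀ n ≤ 1, InF0 (if n = 0 then Xα else Xβ) := fun n _ => by split_ifs <;> assumption
  exact iInf_le_of_le 1 <| iInf_le_of_le _ <| iInf_le_of_le (if_pos rfl) <|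
    iInf_le_of_le (if_neg one_ne_zero) <| iInf_le_of_le hF <| iInf_le_of_le one_pos <| by simp

/-- `(1/2)‖X_α - X_β‖_{L^∞} ≤ d(X_α,X_β) ≤ 2‖X_α - X_β‖`. -/
theorem chainDist_bounds (Xα Xβ : LagTuple) (hα : InF0 Xα) (hβ : InF0 Xβ) :
    LinfDist Xα Xβ ≤ 2 * chainDist Xα Xβ ∧
      chainDist Xα Xβ ≤ 2 * ELagDist Xα Xβ :=
  ⟨LinfDist_le_two_mul_chainDist Xα Xβ,
    (chainDist_le_Jdist hα hβ).trans (Jdist_le_two_mul_ELagDist Xα Xβ)⟩
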